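/- Let G be a nonempty compact convex subset of ℝ². For a unit vector u ∈ ℝ², let w_u(G) = sup_{x∈G} ⟨x, u⟩ − inf_{x∈G} ⟨x, u⟩ denote the width of G in direction u. Then the infimum over t ∈ [0, 2π) of the product w_{(cos t, sin t)}(G) · w_{(−sin t, cos t)}(G) of widths in two perpendicular directions is at most 2·S(G), where S(G) is the two-dimensional Lebesgue measure of G. -/

import Mathlib

/-!
Let `a, b ∈ G` realize the diameter `d` of `G` and let `u` be the direction of `b - a`, `v` the
perpendicular direction. Every chord of `G` has length at most `d`, so `w_u(G) ≤ d`. The points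
`p, q ∈ G` where `⟨·, v⟩` is maximal and minimal lie on opposite sides of the line `ab`, so `G`
contains the two triangles `abp`, `abq` with disjoint interiors, of total area `d · w_v(G) / 2`.
-/

open MeasureTheory Real Set
open scoped Pointwise

def areaForm (v : ℝ × ℝ) : (ℝ × ℝ) →ₗ[ℝ] ℝ := v.1 • LinearMap.snd ℝ ℝ ℝ - v.2 • LinearMap.fst ℝ ℝ ℝ

lemma areaForm_apply (v w : ℝ × ℝ) : areaForm v w = v.1 * w.2 - v.2 * w.1 := by
  simp [areaForm]

lemma areaForm_self (v : ℝ × ℝ) : areaForm v v = 0 := by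
  rw [areaForm_apply, mul_comm, sub_self]

lemma det_fst_smulRight_add_snd_smulRight (v w : ℝ × ℝ) :
    LinearMap.det ((LinearMap.fst ℝ ℝ ℝ).smulRight v + (LinearMap.snd ℝ ℝ ℝ).smulRight w) =
      areaForm v w := by
  rw [← LinearMap.det_toMatrix (Module.Basis.finTwoProd ℝ), Matrix.det_fin_two]
  simp [LinearMap.toMatrix_apply, areaForm_apply, mul_comm]

lemma ofReal_half_le_volume_convexHull_stdTriangle :
    ENNReal.ofReal (1 / 2) ≤ volume (convexHull ℝ {(0 : ℝ × ℝ), (1, 0), (0, 1)}) := by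
  have hsub : regionBetween (fun _ => 0) (fun x => 1 - x) (Ioo 0 1) ⊆
      convexHull ℝ {(0 : ℝ × ℝ), (1, 0), (0, 1)} := by
    rintro ⟨x, y⟩ ⟨⟨hx₀, -⟩, hy₀, hy₁⟩
    have hxy : 0 < x + y := by linarith
    have hq : (x + y)⁻¹ • (x, y) ∈ segment ℝ ((1, 0) : ℝ × ℝ) (0, 1) :=
      ⟨x / (x + y), y / (x + y), by positivity, by positivity, by field_simp, by
        ext <;> simp [div_eq_inv_mul]⟩
    have := (convex_convexHull ℝ {(0 : ℝ × ℝ), (1, 0), (0, 1)}).smul_mem_of_zero_mem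
      (subset_convexHull ℝ _ (by simp)) (segment_subset_convexHull (by simp) (by simp) hq)
      ⟨hxy.le, by linarith⟩
    rwa [smul_inv_smul₀ hxy.ne'] at this
  calc ENNReal.ofReal (1 / 2)
      = volume (regionBetween (fun _ => 0) (fun x => 1 - x) (Ioo 0 1)) := by
        rw [Measure.volume_eq_prod, volume_regionBetween_eq_integral integrableOn_zero
          ((by fun_prop : Continuous fun x : ℝ => 1 - x).integrableOn_Icc.mono_set
            Ioo_subset_Icc_self)
          measurableSet_Ioo fun x hx => by linarith [hx.2]]
        rw [← integral_Ioc_eq_integral_Ioo, ← intervalIntegral.integral_of_le zero_le_one]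
        simp only [Pi.sub_apply, sub_zero]
        rw [intervalIntegral.integral_sub intervalIntegrable_const
          intervalIntegral.intervalIntegrable_id, integral_id]
        norm_num
    _ ≤ _ := measure_mono hsub

lemma ofReal_abs_areaForm_div_two_le_volume_convexHull (a b c : ℝ × ℝ) :
    ENNReal.ofReal (|areaForm (b - a) (c - a)| / 2) ≤ volume (convexHull ℝ {a, b, c}) := by
  set L := (LinearMap.fst ℝ ℝ ℝ).smulRight (b - a) + (LinearMap.snd ℝ ℝ ℝ).smulRight (c - a)
  have hT : convexHull ℝ {a, b, c} = a +ᵥ L '' convexHull ℝ {(0 : ℝ × ℝ), (1, 0), (0, 1)} := by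
    rw [LinearMap.image_convexHull, ← convexHull_vadd]
    congr 1
    simp [L, Set.image_insert_eq, Set.vadd_set_insert]
  rw [hT, measure_vadd, Measure.addHaar_image_linearMap, det_fst_smulRight_add_snd_smulRight,
    div_eq_mul_one_div, ENNReal.ofReal_mul (abs_nonneg _)]
  gcongr
  exact ofReal_half_le_volume_convexHull_stdTriangle

lemma volume_setOf_areaForm_eq_zero {v : ℝ × ℝ} (hv : v ≠ 0) (a : ℝ × ℝ) :
    volume {x | areaForm v x = areaForm v a} = 0 := by
  have hline : {x | areaForm v x = areaForm v a} =
      (AffineSubspace.mk' a (LinearMap.ker (areaForm v)) : Set (ℝ × ℝ)) := by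
    ext x
    rw [SetLike.mem_coe, AffineSubspace.mem_mk', vsub_eq_sub, LinearMap.mem_ker, map_sub,
      sub_eq_zero]
    rfl
  rw [hline]
  refine Measure.addHaar_affineSubspace _ _ fun htop => hv ?_
  have hperp : (-v.2, v.1) ∈ LinearMap.ker (areaForm v) := by
    rw [← AffineSubspace.direction_mk' a (LinearMap.ker (areaForm v)), htop,
      AffineSubspace.direction_top]
    exact Submodule.mem_top
  have : v.1 ^ 2 + v.2 ^ 2 = 0 := by
    rw [LinearMap.mem_ker, areaForm_apply] at hperp
    linarith
  have h₁ : v.1 = 0 := by nlinarith [sq_nonneg v.1, sq_nonneg v.2]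
  have h₂ : v.2 = 0 := by nlinarith [sq_nonneg v.1, sq_nonneg v.2]
  exact Prod.ext h₁ h₂

lemma volume_convexHull_add_volume_convexHull_le {G : Set (ℝ × ℝ)} (hG : Convex ℝ G)
    {a b p q : ℝ × ℝ} (ha : a ∈ G) (hb : b ∈ G) (hp : p ∈ G) (hq : q ∈ G) (hab : a ≠ b)
    (hpa : areaForm (b - a) a ≤ areaForm (b - a) p)
    (hqa : areaForm (b - a) q ≤ areaForm (b - a) a) :
    volume (convexHull ℝ {a, b, p}) + volume (convexHull ℝ {a, b, q}) ≤ volume G := by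
  set φ := areaForm (b - a)
  have hba : φ b = φ a := by rw [← sub_eq_zero, ← map_sub, areaForm_self]
  have hP : convexHull ℝ {a, b, p} ⊆ {x | φ a ≤ φ x} :=
    convexHull_min (by simp [insert_subset_iff, hba, hpa]) (convex_halfSpace_ge φ.isLinear _)
  have hQ : convexHull ℝ {a, b, q} ⊆ {x | φ x ≤ φ a} :=
    convexHull_min (by simp [insert_subset_iff, hba, hqa]) (convex_halfSpace_le φ.isLinear _)
  have hPQ : volume (convexHull ℝ {a, b, p} ∩ convexHull ℝ {a, b, q}) = 0 :=
    measure_mono_null (fun x hx => le_antisymm (hQ hx.2) (hP hx.1))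
      (volume_setOf_areaForm_eq_zero (sub_ne_zero.2 hab.symm) a)
  calc volume (convexHull ℝ {a, b, p}) + volume (convexHull ℝ {a, b, q})
      = volume (convexHull ℝ {a, b, p} ∪ convexHull ℝ {a, b, q}) := by
        have hQmeas := ((toFinite {a, b, q}).isCompact_convexHull (𝕜 := ℝ)).measurableSet
        rw [← measure_union_add_inter _ hQmeas, hPQ, add_zero]
    _ ≤ volume G := by
        refine measure_mono (union_subset ?_ ?_) <;>
          exact convexHull_min (by simp [insert_subset_iff, *]) hG

lemma exists_mem_Ico_eq_smul_cos_sin (w : ℝ × ℝ) :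
    ∃ t ∈ Ico 0 (2 * π), w = √(w.1 ^ 2 + w.2 ^ 2) • (cos t, sin t) := by
  set z : ℂ := ⟨w.1, w.2⟩
  have hz : ‖z‖ = √(w.1 ^ 2 + w.2 ^ 2) := by rw [Complex.norm_def, Complex.normSq_mk]; ring_nf
  refine ⟨toIcoMod two_pi_pos 0 z.arg, toIcoMod_mem_Ico' _ _, ?_⟩
  rw [← self_sub_toIcoDiv_zsmul, cos_periodic.sub_zsmul_eq, sin_periodic.sub_zsmul_eq, ← hz]
  ext
  · exact (Complex.norm_mul_cos_arg z).symm
  · exact (Complex.norm_mul_sin_arg z).symm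

noncomputable def width (G : Set (ℝ × ℝ)) (u : ℝ × ℝ) : ℝ :=
  sSup ((fun p : ℝ × ℝ => p.1 * u.1 + p.2 * u.2) '' G) -
    sInf ((fun p : ℝ × ℝ => p.1 * u.1 + p.2 * u.2) '' G)

lemma width_eq_diam {G : Set (ℝ × ℝ)} (hG : IsCompact G) (u : ℝ × ℝ) :
    width G u = Metric.diam ((fun p : ℝ × ℝ => p.1 * u.1 + p.2 * u.2) '' G) :=
  (Real.diam_eq (hG.image (by fun_prop)).isBounded).symm

lemma width_nonneg {G : Set (ℝ × ℝ)} (hG : IsCompact G) (u : ℝ × ℝ) : 0 ≤ width G u :=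
  (width_eq_diam hG u).symm ▸ Metric.diam_nonneg

lemma width_smul (G : Set (ℝ × ℝ)) {c : ℝ} (hc : 0 ≤ c) (u : ℝ × ℝ) :
    width G (c • u) = c * width G u := by
  have himage : (fun p : ℝ × ℝ => p.1 * (c • u).1 + p.2 * (c • u).2) '' G =
      c • (fun p : ℝ × ℝ => p.1 * u.1 + p.2 * u.2) '' G := by
    rw [← Set.image_smul, Set.image_image]
    refine image_congr fun p _ => ?_
    simp only [Prod.smul_fst, Prod.smul_snd, smul_eq_mul]
    ring
  rw [width, width, himage, Real.sSup_smul_of_nonneg hc, Real.sInf_smul_of_nonneg hc, smul_eq_mul,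
    smul_eq_mul, mul_sub]

lemma width_le_of_forall_sq_le {G : Set (ℝ × ℝ)} (hG : IsCompact G) {u : ℝ × ℝ}
    (hu : u.1 ^ 2 + u.2 ^ 2 = 1) {d : ℝ} (hd : 0 ≤ d)
    (h : ∀ x ∈ G, ∀ y ∈ G, (x.1 - y.1) ^ 2 + (x.2 - y.2) ^ 2 ≤ d ^ 2) : width G u ≤ d := by
  rw [width_eq_diam hG]
  refine Metric.diam_le_of_forall_dist_le hd ?_
  rintro _ ⟨x, hx, rfl⟩ _ ⟨y, hy, rfl⟩
  refine abs_le_of_sq_le_sq ?_ hd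
  have := h x hx y hy
  nlinarith [sq_nonneg ((x.1 - y.1) * u.2 - (x.2 - y.2) * u.1)]

lemma width_perp_le_two_mul_volume {G : Set (ℝ × ℝ)} (hconv : Convex ℝ G) (hcomp : IsCompact G)
    {a b : ℝ × ℝ} (ha : a ∈ G) (hb : b ∈ G) :
    width G (-(b - a).2, (b - a).1) ≤ 2 * (volume G).toReal := by
  rcases eq_or_ne a b with rfl | hab
  · have hzero : (-(a - a).2, (a - a).1) = (0 : ℝ) • (0 : ℝ × ℝ) := by simp
    rw [hzero, width_smul G le_rfl, zero_mul]
    positivity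
  set φ := areaForm (b - a)
  have hφ : ContinuousOn φ G := φ.continuous_of_finiteDimensional.continuousOn
  obtain ⟨p, hp, hsup, hpmax⟩ := hcomp.exists_sSup_image_eq_and_ge ⟨a, ha⟩ hφ
  obtain ⟨q, hq, hinf, hqmin⟩ := hcomp.exists_sInf_image_eq_and_le ⟨a, ha⟩ hφ
  have hwidth : width G (-(b - a).2, (b - a).1) = φ p - φ q := by
    have : (fun x : ℝ × ℝ => x.1 * (-(b - a).2) + x.2 * (b - a).1) = φ := by
      ext x; rw [areaForm_apply]; ring
    rw [width, this, hsup, hinf]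
  have hvol : ENNReal.ofReal ((φ p - φ q) / 2) ≤ volume G :=
    calc ENNReal.ofReal ((φ p - φ q) / 2)
        = ENNReal.ofReal (|φ (p - a)| / 2) + ENNReal.ofReal (|φ (q - a)| / 2) := by
          rw [map_sub, map_sub, abs_of_nonneg (sub_nonneg.2 (hpmax a ha)),
            abs_of_nonpos (sub_nonpos.2 (hqmin a ha)),
            ← ENNReal.ofReal_add (by linarith [hpmax a ha]) (by linarith [hqmin a ha])]
          congr 1
          ring
      _ ≤ volume (convexHull ℝ {a, b, p}) + volume (convexHull ℝ {a, b, q}) :=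
          add_le_add (ofReal_abs_areaForm_div_two_le_volume_convexHull a b p)
            (ofReal_abs_areaForm_div_two_le_volume_convexHull a b q)
      _ ≤ volume G := volume_convexHull_add_volume_convexHull_le hconv ha hb hp hq hab
          (hpmax a ha) (hqmin a ha)
  rw [ENNReal.ofReal_le_iff_le_toReal hcomp.measure_lt_top.ne] at hvol
  linarith

theorem inf_width_mul_width_le_two_mul_area
    (G : Set (ℝ × ℝ)) (hne : G.Nonempty) (hcomp : IsCompact G) (hconv : Convex ℝ G) :
    sInf ((fun t : ℝ =>
        (sSup ((fun p : ℝ × ℝ => p.1 * cos t + p.2 * sin t) '' G) -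
          sInf ((fun p : ℝ × ℝ => p.1 * cos t + p.2 * sin t) '' G)) *
        (sSup ((fun p : ℝ × ℝ => p.1 * (-sin t) + p.2 * cos t) '' G) -
          sInf ((fun p : ℝ × ℝ => p.1 * (-sin t) + p.2 * cos t) '' G))) ''
      Set.Ico 0 (2 * π))
    ≤ 2 * (volume G).toReal := by
  change sInf ((fun t => width G (cos t, sin t) * width G (-sin t, cos t)) '' Ico 0 (2 * π)) ≤ _
  obtain ⟨⟨a, b⟩, ⟨ha, hb⟩, hdiam⟩ := (hcomp.prod hcomp).exists_isMaxOn (hne.prod hne)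
    (by fun_prop : Continuous fun z : (ℝ × ℝ) × (ℝ × ℝ) =>
      (z.2.1 - z.1.1) ^ 2 + (z.2.2 - z.1.2) ^ 2).continuousOn
  obtain ⟨t, ht, hba⟩ := exists_mem_Ico_eq_smul_cos_sin (b - a)
  set d := √((b - a).1 ^ 2 + (b - a).2 ^ 2)
  have hd : 0 ≤ d := sqrt_nonneg _
  have hw₁ : width G (cos t, sin t) ≤ d := by
    refine width_le_of_forall_sq_le hcomp (cos_sq_add_sin_sq t) hd fun x hx y hy => ?_
    rw [sq_sqrt (by positivity)]
    exact hdiam (mk_mem_prod hy hx)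
  have hw₂ : d * width G (-sin t, cos t) ≤ 2 * (volume G).toReal := by
    -- `b - a = d • (cos t, sin t)`, so `d • (-sin t, cos t)` is `b - a` turned by a right angle
    rw [← width_smul G hd]
    convert width_perp_le_two_mul_volume hconv hcomp ha hb using 3 <;> rw [hba] <;> simp
  refine csInf_le_of_le ⟨0, ?_⟩ ⟨t, ht, rfl⟩ ?_
  · rintro _ ⟨s, -, rfl⟩
    exact mul_nonneg (width_nonneg hcomp _) (width_nonneg hcomp _)
  · exact (mul_le_mul_of_nonneg_right hw₁ (width_nonneg hcomp _)).trans hw₂
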